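/- For ξ ∈ ℝ with sin(πξ) ≠ 0, the principal-value sum Σ_{y∈ℤ} e^{−2πiyξ}/(y + 1/2) equals −π i e^{iπξ} · sgn(sin(πξ)). -/

import Mathlib

open scoped Real
open Filter
open Finset
open scoped Topology

noncomputable section


noncomputable def Tsum (N : ℕ) (θ : ℝ) : ℝ :=
  ∑ k ∈ Finset.range N, Real.sin ((2*k+1)*θ) / (2*k+1)

theorem sum_cos_odd (N : ℕ) (t : ℝ) :
    (∑ k ∈ Finset.range N, Real.cos ((2*k+1)*t)) * (2 * Real.sin t) = Real.sin (2*N*t) := by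
  induction N with
  | zero => simp
  | succ n ih =>
    rw [Finset.sum_range_succ, add_mul, ih]
    have h1 := Real.sin_add (2*n*t) (2*t)
    have h2 := Real.cos_add ((2*n*t)) t
    have h3 := Real.sin_two_mul t
    have h4 := Real.cos_two_mul t
    have e1 : (2*(n+1:ℕ):ℝ)*t = 2*n*t + 2*t := by push_cast; ring
    have e2 : ((2*(n:ℕ)+1:ℝ))*t = 2*n*t + t := by push_cast; ring
    rw [e1, e2, h1, h2, h3, h4]
    have h5 := Real.sin_sq_add_cos_sq t
    linear_combination (-2*Real.sin (2*(n:ℝ)*t)) * h5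

theorem Tsum_pi_div_two (N : ℕ) :
    Tsum N (π/2) = ∑ k ∈ Finset.range N, (-1:ℝ)^k / (2*k+1) := by
  unfold Tsum
  refine Finset.sum_congr rfl fun k _ => ?_
  have : ((2*k+1:ℝ))*(π/2) = π/2 + (k:ℤ)*π := by push_cast; ring
  rw [this, Real.sin_add_int_mul_pi, Real.sin_pi_div_two]
  rw [zpow_natCast]
  ring

theorem sin_pos_uIcc {θ : ℝ} (hθ : θ ∈ Set.Ioo 0 π) {t : ℝ} (ht : t ∈ Set.uIcc (π/2) θ) :
    0 < Real.sin t := by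
  rw [Set.uIcc_eq_union] at ht
  have hπ := Real.pi_pos
  apply Real.sin_pos_of_pos_of_lt_pi
  · rcases ht with h | h
    · rcases Set.mem_Icc.1 h with ⟨h1, _⟩; linarith [hθ.1]
    · rcases Set.mem_Icc.1 h with ⟨h1, _⟩; linarith [hθ.1]
  · rcases ht with h | h
    · rcases Set.mem_Icc.1 h with ⟨_, h2⟩; linarith [hθ.2]
    · rcases Set.mem_Icc.1 h with ⟨_, h2⟩; linarith [hθ.2]

theorem hasDerivAt_sin_mul (c t : ℝ) (hc : c ≠ 0) :
    HasDerivAt (fun t => Real.sin (c*t) / c) (Real.cos (c*t)) t := by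
  have h := ((Real.hasDerivAt_sin (c*t)).comp t ((hasDerivAt_id t).const_mul c)).div_const c
  convert h using 1
  · rfl
  · rfl
  · rfl
  field_simp

theorem Tsum_sub_eq (N : ℕ) {θ : ℝ} (hθ : θ ∈ Set.Ioo 0 π) :
    Tsum N θ - Tsum N (π/2)
      = ∫ t in (π/2)..θ, Real.sin (2*N*t) * (1 / (2 * Real.sin t)) := by
  have hc : ∀ k : ℕ, ((2*k+1:ℝ)) ≠ 0 := fun k => by positivity
  have hk : ∀ k : ℕ, (∫ t in (π/2)..θ, Real.cos ((2*k+1)*t))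
      = Real.sin ((2*k+1)*θ) / (2*k+1) - Real.sin ((2*k+1)*(π/2)) / (2*k+1) := by
    intro k
    exact intervalIntegral.integral_eq_sub_of_hasDerivAt
      (fun t _ => hasDerivAt_sin_mul _ t (hc k))
      ((Real.continuous_cos.comp (continuous_const.mul continuous_id)).intervalIntegrable _ _)
  have h1 : Tsum N θ - Tsum N (π/2)
      = ∫ t in (π/2)..θ, ∑ k ∈ Finset.range N, Real.cos ((2*k+1)*t) := by
    rw [intervalIntegral.integral_finset_sum (μ := MeasureTheory.volume)
      (f := fun (k : ℕ) (t : ℝ) => Real.cos ((2*k+1)*t)) (fun k _ =>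
      ((Real.continuous_cos.comp (continuous_const.mul continuous_id)).intervalIntegrable _ _))]
    simp only [hk]
    rw [Finset.sum_sub_distrib]
    rfl
  rw [h1]
  apply intervalIntegral.integral_congr
  intro t ht
  have hs := sin_pos_uIcc hθ ht
  have := sum_cos_odd N t
  field_simp
  linarith [this, show Real.sin (2*t*N) = Real.sin (2*N*t) from congrArg Real.sin (by ring)]

theorem integral_tendsto_zero {θ : ℝ} (hθ : θ ∈ Set.Ioo 0 π) :
    Tendsto (fun N : ℕ => ∫ t in (π/2)..θ, Real.sin (2*N*t) * (1 / (2*Real.sin t)))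
      atTop (𝓝 0) := by
  set u : ℝ → ℝ := fun t => (2*Real.sin t)⁻¹ with hu_def
  set u' : ℝ → ℝ := fun t => -(2*Real.cos t)/(2*Real.sin t)^2 with hu'_def
  have hK : IsCompact (Set.uIcc (π/2) θ) := isCompact_uIcc
  have hsin : ∀ t ∈ Set.uIcc (π/2) θ, (2*Real.sin t) ≠ 0 := fun t ht =>
    ne_of_gt (by linarith [sin_pos_uIcc hθ ht])
  have hu'cont : ContinuousOn u' (Set.uIcc (π/2) θ) := by
    apply ContinuousOn.div
    · exact (continuous_const.mul Real.continuous_cos).neg.continuousOn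
    · exact ((continuous_const.mul Real.continuous_sin).pow 2).continuousOn
    · exact fun t ht => pow_ne_zero 2 (hsin t ht)
  obtain ⟨C, hC⟩ := hK.exists_bound_of_continuousOn hu'cont
  have hC0 : 0 ≤ C := le_trans (norm_nonneg _) (hC _ Set.left_mem_uIcc)
  set C0 : ℝ := |u θ| + |u (π/2)| + C * |θ - π/2| with hC0_def
  have hC0nn : 0 ≤ C0 := by positivity
  have key : ∀ N : ℕ, 1 ≤ N →
      |∫ t in (π/2)..θ, Real.sin (2*N*t) * (1 / (2*Real.sin t))| ≤ C0 / N := by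
    intro N hN
    have hNpos : (0:ℝ) < N := by exact_mod_cast hN
    set c : ℝ := 2*N with hc_def
    have hcpos : (0:ℝ) < c := by positivity
    set v : ℝ → ℝ := fun t => -(Real.cos (c*t))/c with hv_def
    have hv : ∀ t : ℝ, HasDerivAt v (Real.sin (c*t)) t := by
      intro t
      have h := (((Real.hasDerivAt_cos (c*t)).comp t
        ((hasDerivAt_id t).const_mul c)).div_const c).neg
      convert h using 1
      · rfl
      · rfl
      · funext x
        simp [hv_def, Function.comp, neg_div]
      · rw [mul_one, neg_mul, neg_div, neg_neg, mul_div_assoc, div_self (ne_of_gt hcpos), mul_one]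
    have hu : ∀ t ∈ Set.uIcc (π/2) θ, HasDerivAt u (u' t) t := by
      intro t ht
      have h := ((Real.hasDerivAt_sin t).const_mul 2).inv (hsin t ht)
      convert h using 1
      all_goals rfl
    have hint : (∫ t in (π/2)..θ, Real.sin (c*t) * (1 / (2*Real.sin t)))
        = ∫ t in (π/2)..θ, u t * Real.sin (c*t) := by
      apply intervalIntegral.integral_congr
      intro t _
      show Real.sin (c*t) * (1 / (2*Real.sin t)) = (2*Real.sin t)⁻¹ * Real.sin (c*t)
      rw [one_div]; ring
    have hparts := intervalIntegral.integral_mul_deriv_eq_deriv_mul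
      (a := π/2) (b := θ) (u := u) (v := v) (u' := u') (v' := fun t => Real.sin (c*t))
      hu (fun t _ => hv t)
      (hu'cont.intervalIntegrable)
      ((Real.continuous_sin.comp (continuous_const.mul continuous_id)).intervalIntegrable _ _)
    have hvb : ∀ t : ℝ, |v t| ≤ 1/c := by
      intro t
      have hv1 : |v t| = |Real.cos (c*t)| / c := by
        rw [hv_def]; rw [abs_div, abs_neg, abs_of_pos hcpos]
      rw [hv1]
      gcongr
      exact Real.abs_cos_le_one _
    have hIb : |∫ t in (π/2)..θ, u' t * v t| ≤ C * (1/c) * |θ - π/2| := by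
      have := intervalIntegral.norm_integral_le_of_norm_le_const
        (C := C * (1/c)) (f := fun t => u' t * v t) (a := π/2) (b := θ) ?_
      · simpa using this
      · intro t ht
        have ht' : t ∈ Set.uIcc (π/2) θ := Set.uIoc_subset_uIcc ht
        rw [Real.norm_eq_abs, abs_mul]
        exact mul_le_mul (hC t ht') (hvb t) (abs_nonneg _) hC0
    rw [hint, hparts]
    have h1 : |u θ * v θ| ≤ |u θ| * (1/c) := by
      rw [abs_mul]; exact mul_le_mul_of_nonneg_left (hvb θ) (abs_nonneg _)
    have h2 : |u (π/2) * v (π/2)| ≤ |u (π/2)| * (1/c) := by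
      rw [abs_mul]; exact mul_le_mul_of_nonneg_left (hvb _) (abs_nonneg _)
    have habs : |u θ * v θ - u (π/2) * v (π/2) - ∫ t in (π/2)..θ, u' t * v t|
        ≤ |u θ| * (1/c) + |u (π/2)| * (1/c) + C * (1/c) * |θ - π/2| := by
      calc _ ≤ |u θ * v θ| + |u (π/2) * v (π/2)| + |∫ t in (π/2)..θ, u' t * v t| := by
              apply (abs_sub _ _).trans
              gcongr
              exact abs_sub _ _
        _ ≤ _ := by gcongr
    apply habs.trans
    rw [hc_def]
    rw [div_eq_mul_inv C0 (N:ℝ)]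
    have hhalf : (2*(N:ℝ))⁻¹ ≤ (N:ℝ)⁻¹ := by
      apply inv_anti₀ hNpos; linarith
    calc |u θ| * (1/(2*N)) + |u (π/2)| * (1/(2*N)) + C * (1/(2*N)) * |θ - π/2|
        ≤ C0 * (1/(2*N)) := by rw [hC0_def]; ring_nf; nlinarith [abs_nonneg (θ - π/2)]
      _ ≤ C0 * (N:ℝ)⁻¹ := by rw [one_div]; exact mul_le_mul_of_nonneg_left hhalf hC0nn
  apply squeeze_zero_norm' (a := fun N : ℕ => C0 / N)
  · filter_upwards [eventually_ge_atTop 1] with N hN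
    simpa [Real.norm_eq_abs] using key N hN
  · exact tendsto_const_div_atTop_nhds_zero_nat C0

theorem Tsum_tendsto_Ioo {θ : ℝ} (hθ : θ ∈ Set.Ioo 0 π) :
    Tendsto (fun N : ℕ => Tsum N θ) atTop (𝓝 (π/4)) := by
  have h0 : Tendsto (fun N : ℕ => Tsum N (π/2)) atTop (𝓝 (π/4)) := by
    simpa [Tsum_pi_div_two] using Real.tendsto_sum_pi_div_four
  have h1 := integral_tendsto_zero hθ
  rw [show (fun N : ℕ => ∫ t in (π/2)..θ, Real.sin (2*N*t) * (1/(2*Real.sin t)))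
      = fun N : ℕ => Tsum N θ - Tsum N (π/2) from funext fun N => (Tsum_sub_eq N hθ).symm] at h1
  have h3 := h1.add h0
  simp only [zero_add] at h3
  have h2 : (fun N : ℕ => (Tsum N θ - Tsum N (π/2)) + Tsum N (π/2)) = fun N => Tsum N θ := by
    funext N; ring
  rwa [h2] at h3

theorem Tsum_tendsto {θ : ℝ} (hθ : Real.sin θ ≠ 0) :
    Tendsto (fun N : ℕ => Tsum N θ) atTop (𝓝 (π/4 * Real.sign (Real.sin θ))) := by
  have hπ := Real.pi_pos
  set n : ℤ := ⌊θ/π⌋ with hn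
  set θ₀ : ℝ := θ - n*π with hθ₀
  have hfl : (n:ℝ) * π ≤ θ := (le_div_iff₀ hπ).mp (Int.floor_le (θ/π))
  have hfu : θ < ((n:ℝ)+1) * π := (div_lt_iff₀ hπ).mp (by exact_mod_cast Int.lt_floor_add_one (θ/π))
  have h01 : 0 ≤ θ₀ := by rw [hθ₀]; linarith
  have h02 : θ₀ < π := by rw [hθ₀]; linarith
  have hsin : Real.sin θ = (-1:ℝ)^n * Real.sin θ₀ := by
    have h : θ = θ₀ + n*π := by rw [hθ₀]; ring
    rw [h, Real.sin_add_int_mul_pi]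
  have hθ0 : θ₀ ≠ 0 := by
    intro h; apply hθ; rw [hsin, h, Real.sin_zero, mul_zero]
  have hmem : θ₀ ∈ Set.Ioo 0 π := ⟨lt_of_le_of_ne h01 (Ne.symm hθ0), h02⟩
  have hpos : 0 < Real.sin θ₀ := Real.sin_pos_of_pos_of_lt_pi hmem.1 hmem.2
  have hTeq : (fun N : ℕ => Tsum N θ) = fun N : ℕ => (-1:ℝ)^n * Tsum N θ₀ := by
    funext N
    unfold Tsum
    rw [Finset.mul_sum]
    refine Finset.sum_congr rfl fun k _ => ?_
    have h1 : (2*k+1:ℝ)*θ = (2*k+1)*θ₀ + ((2*(k:ℤ)+1)*n : ℤ)*π := by push_cast; ring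
    rw [h1, Real.sin_add_int_mul_pi]
    have h2 : ((-1:ℝ))^((2*(k:ℤ)+1)*n) = (-1:ℝ)^n := by
      rw [zpow_mul]
      congr 1
      exact Odd.neg_one_zpow ⟨k, by ring⟩
    rw [h2]; ring
  have hsign : Real.sign (Real.sin θ) = (-1:ℝ)^n := by
    rcases Int.even_or_odd n with he | ho
    · rw [he.neg_one_zpow] at hsin ⊢
      rw [hsin, one_mul]
      exact Real.sign_of_pos hpos
    · rw [ho.neg_one_zpow] at hsin ⊢
      rw [hsin]
      rw [Real.sign_of_neg (by linarith)]
  rw [hsign, hTeq]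
  have := (Tsum_tendsto_Ioo hmem).const_mul ((-1:ℝ)^n)
  simpa [mul_comm] using this

theorem pv_sum_eq (ξ : ℝ) (N : ℕ) :
    (∑ y ∈ Finset.Icc (-(N:ℤ)) (N:ℤ),
        Complex.exp (-(2 * (π:ℂ) * Complex.I * (y:ℂ) * (ξ:ℂ))) / ((y:ℂ) + 1/2))
      = Complex.exp ((π:ℂ)*(ξ:ℂ)*Complex.I) * (-4*Complex.I) * ((Tsum N (π*ξ) : ℝ) : ℂ)
        + Complex.exp (-(2 * (π:ℂ) * Complex.I * (N:ℂ) * (ξ:ℂ))) / ((N:ℂ) + 1/2) := by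
  set f : ℤ → ℂ := fun y =>
    Complex.exp (-(2 * (π:ℂ) * Complex.I * (y:ℂ) * (ξ:ℂ))) / ((y:ℂ) + 1/2) with hf
  have step1 : ∀ M : ℕ, (∑ y ∈ Finset.Icc (-(M:ℤ)) (M:ℤ), f y)
      = (∑ k ∈ Finset.range M, (f k + f (-1-(k:ℤ)))) + f M := by
    intro M
    induction M with
    | zero => simp
    | succ n ih =>
      have hIcc : Finset.Icc (-((n:ℤ)+1)) ((n:ℤ)+1)
          = insert (-((n:ℤ)+1)) (insert ((n:ℤ)+1) (Finset.Icc (-(n:ℤ)) (n:ℤ))) := by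
        ext x; simp only [Finset.mem_Icc, Finset.mem_insert]; omega
      have hcast : (-(((n:ℕ)+1:ℕ):ℤ)) = -((n:ℤ)+1) := by push_cast; ring
      have hcast2 : ((((n:ℕ)+1:ℕ)):ℤ) = ((n:ℤ)+1) := by push_cast; ring
      rw [hcast, hcast2, hIcc, Finset.sum_insert, Finset.sum_insert, ih,
        Finset.sum_range_succ]
      · have e : (-1 - (n:ℤ)) = -((n:ℤ)+1) := by ring
        rw [e]
        push_cast
        ring
      · simp only [Finset.mem_Icc]; omega
      · simp only [Finset.mem_insert, Finset.mem_Icc]; omega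
  have hterm : ∀ k : ℕ, f k + f (-1-(k:ℤ))
      = Complex.exp ((π:ℂ)*(ξ:ℂ)*Complex.I) * (-4*Complex.I) *
        (((Real.sin ((2*k+1)*(π*ξ)) : ℝ) : ℂ) / (2*(k:ℂ)+1)) := by
    intro k
    have hz : ((Real.sin ((2*k+1)*(π*ξ)) : ℝ) : ℂ)
        = Complex.sin ((((2*k+1)*(π*ξ) : ℝ)) : ℂ) := Complex.ofReal_sin _
    set z : ℂ := ((((2*k+1)*(π*ξ) : ℝ)) : ℂ) with hzdef
    have hzz : z = (2*(k:ℂ)+1)*((π:ℂ)*(ξ:ℂ)) := by rw [hzdef]; push_cast; ring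
    have e1 : (-(2 * (π:ℂ) * Complex.I * ((k:ℤ):ℂ) * (ξ:ℂ)))
        = (π:ℂ)*(ξ:ℂ)*Complex.I + (-z)*Complex.I := by rw [hzz]; push_cast; ring
    have e2 : (-(2 * (π:ℂ) * Complex.I * (((-1-(k:ℤ)):ℤ):ℂ) * (ξ:ℂ)))
        = (π:ℂ)*(ξ:ℂ)*Complex.I + z*Complex.I := by rw [hzz]; push_cast; ring
    have d1 : ((k:ℂ) + 1/2) ≠ 0 := by
      have h : ((k:ℝ) + 1/2) ≠ 0 := by positivity
      have e : ((k:ℂ) + 1/2) = (((k:ℝ) + 1/2 : ℝ) : ℂ) := by push_cast; ring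
      rw [e]
      exact Complex.ofReal_ne_zero.mpr h
    have d2 : ((((-1-(k:ℤ)):ℤ):ℂ) + 1/2) ≠ 0 := by
      have h : ((-1-(k:ℝ)) + 1/2) ≠ 0 := by
        have : (0:ℝ) ≤ k := Nat.cast_nonneg k
        intro hc; nlinarith
      have e : ((((-1-(k:ℤ)):ℤ):ℂ) + 1/2) = (((-1-(k:ℝ)) + 1/2 : ℝ) : ℂ) := by push_cast; ring
      rw [e]
      exact Complex.ofReal_ne_zero.mpr h
    have d3 : (2*(k:ℂ)+1) ≠ 0 := by
      have h : (2*(k:ℝ)+1) ≠ 0 := by positivity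
      have e : (2*(k:ℂ)+1) = ((2*(k:ℝ)+1 : ℝ) : ℂ) := by push_cast; ring
      rw [e]
      exact Complex.ofReal_ne_zero.mpr h
    have d2'' : (-1-(k:ℂ)+1/2) ≠ 0 := by
      have h : ((-1-(k:ℝ)) + 1/2) ≠ 0 := by
        have : (0:ℝ) ≤ k := Nat.cast_nonneg k
        intro hc; nlinarith
      have e : (-1-(k:ℂ)+1/2) = (((-1-(k:ℝ)) + 1/2 : ℝ) : ℂ) := by push_cast; ring
      rw [e]
      exact Complex.ofReal_ne_zero.mpr h
    have hzexp1 : Complex.exp ((-z)*Complex.I) = Complex.cos z - Complex.sin z * Complex.I := by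
      rw [Complex.exp_mul_I, Complex.cos_neg, Complex.sin_neg]; ring
    have hzexp2 : Complex.exp (z*Complex.I) = Complex.cos z + Complex.sin z * Complex.I :=
      Complex.exp_mul_I z
    have hd2' : (((-1-(k:ℤ)):ℤ):ℂ) = -1-(k:ℂ) := by push_cast; ring
    rw [hf]
    simp only []
    rw [hz, e1, e2, Complex.exp_add, Complex.exp_add, hzexp1, hzexp2, hd2']
    have g1 : (1+(k:ℂ)*2) ≠ 0 := by
      have h : (1+(k:ℝ)*2) ≠ 0 := by positivity
      have e : (1+(k:ℂ)*2) = ((1+(k:ℝ)*2 : ℝ) : ℂ) := by push_cast; ring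
      rw [e]; exact Complex.ofReal_ne_zero.mpr h
    have g2 : (-1-(k:ℂ)*2) ≠ 0 := by
      rw [show (-1-(k:ℂ)*2) = -(1+(k:ℂ)*2) from by ring, neg_ne_zero]; exact g1
    field_simp [d1, d2'', d3, g1, g2]
    push_cast
    rw [show (2*(-1-(k:ℂ))+1) = -((k:ℂ)*2+1) from by ring, div_neg]
    have g3 : ((k:ℂ)*2+1) ≠ 0 := by
      rw [show ((k:ℂ)*2+1) = 1+(k:ℂ)*2 from by ring]; exact g1
    field_simp
    ring
  rw [step1, Finset.sum_congr rfl (fun k _ => hterm k), ← Finset.mul_sum]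
  have hT : (∑ k ∈ Finset.range N, (((Real.sin ((2*k+1)*(π*ξ)) : ℝ) : ℂ) / (2*(k:ℂ)+1)))
      = ((Tsum N (π*ξ) : ℝ) : ℂ) := by
    rw [Tsum]; push_cast; rfl
  rw [hT]
  congr 1

/-- For `sin(πξ) ≠ 0`, the principal-value sum `Σ_{y∈ℤ} e^{-2πiyξ}/(y+1/2)` equals
`-π i e^{iπξ} sgn(sin(πξ))`, the sum being the limit of symmetric partial sums. -/
theorem pv_sum_exp_div (ξ : ℝ) (hξ : Real.sin (π * ξ) ≠ 0) :
    Tendsto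
      (fun N : ℕ => ∑ y ∈ Finset.Icc (-(N : ℤ)) (N : ℤ),
        Complex.exp (-(2 * (π : ℂ) * Complex.I * (y : ℂ) * (ξ : ℂ))) / ((y : ℂ) + 1 / 2))
      atTop
      (nhds (-(π : ℂ) * Complex.I * Complex.exp ((π : ℂ) * (ξ : ℂ) * Complex.I) *
        ((Real.sign (Real.sin (π * ξ)) : ℝ) : ℂ))) := by
  have hT := Tsum_tendsto (θ := π*ξ) hξ
  have h1 : Tendsto (fun N : ℕ => ((Tsum N (π*ξ) : ℝ) : ℂ)) atTop
      (𝓝 (((π/4 * Real.sign (Real.sin (π*ξ)) : ℝ) : ℂ))) :=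
    (Complex.continuous_ofReal.tendsto _).comp hT
  have h2 := h1.const_mul (Complex.exp ((π:ℂ)*(ξ:ℂ)*Complex.I) * (-4*Complex.I))
  have h3 : Tendsto (fun N : ℕ =>
      Complex.exp (-(2 * (π:ℂ) * Complex.I * (N:ℂ) * (ξ:ℂ))) / ((N:ℂ) + 1/2)) atTop (𝓝 0) := by
    apply squeeze_zero_norm' (a := fun N : ℕ => 1/(N:ℝ))
    · filter_upwards [eventually_ge_atTop 1] with N hN
      have hNpos : (0:ℝ) < N := by exact_mod_cast hN
      rw [norm_div]
      have hnorm : ‖Complex.exp (-(2 * (π:ℂ) * Complex.I * (N:ℂ) * (ξ:ℂ)))‖ = 1 := by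
        rw [show -(2 * (π:ℂ) * Complex.I * (N:ℂ) * (ξ:ℂ))
            = ((-(2*π*N*ξ) : ℝ) : ℂ) * Complex.I from by push_cast; ring]
        exact Complex.norm_exp_ofReal_mul_I _
      rw [hnorm]
      have hden : ‖(N:ℂ) + 1/2‖ = (N:ℝ) + 1/2 := by
        rw [show (N:ℂ) + 1/2 = (((N:ℝ) + 1/2 : ℝ) : ℂ) from by push_cast; ring,
          Complex.norm_real]
        exact abs_of_pos (by positivity)
      rw [hden]
      apply one_div_le_one_div_of_le hNpos
      linarith
    · exact tendsto_one_div_atTop_nhds_zero_nat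
  have h4 := h2.add h3
  rw [show (fun N : ℕ => Complex.exp ((π:ℂ)*(ξ:ℂ)*Complex.I) * (-4*Complex.I)
        * ((Tsum N (π*ξ) : ℝ) : ℂ)
      + Complex.exp (-(2 * (π:ℂ) * Complex.I * (N:ℂ) * (ξ:ℂ))) / ((N:ℂ) + 1/2))
      = (fun N : ℕ => ∑ y ∈ Finset.Icc (-(N : ℤ)) (N : ℤ),
        Complex.exp (-(2 * (π : ℂ) * Complex.I * (y : ℂ) * (ξ : ℂ))) / ((y : ℂ) + 1 / 2))
    from funext fun N => (pv_sum_eq ξ N).symm] at h4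
  convert h4 using 2
  push_cast
  ring
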